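/- arXiv:2602.20143 — 4 statements merged into one kernel-verified Lean document; each statement's English description precedes it below -/
import Mathlib

section
/- Let Ω be a finite set, n ≥ 1, and A ⊆ Ω^n with uniform measure μ(A) = α ∈ (0,1). Define U(A) = Ω^n \ ⋃_{j=0}^{n-1} s^j(A) × Ω^j, where s is the shift map dropping the first letter. Then μ(U(A)) ≤ (n/(n+1))^{n+1} · 1/(αn). -/
/-- Uniform measure (density) of a set of words of length `n` over alphabet `Ω`. -/
noncomputable def meas {Ω : Type*} [Fintype Ω] {n : ℕ} (S : Set (Fin n → Ω)) : ℝ :=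
  (Nat.card S : ℝ) / (Fintype.card Ω : ℝ) ^ n

/-- `covers A j` is the set `s^j(A) × Ω^j ⊆ Ω^n`: words whose first `n - j` letters
agree with the last `n - j` letters of some word of `A`. -/
def covers {Ω : Type*} {n : ℕ} (A : Set (Fin n → Ω)) (j : ℕ) : Set (Fin n → Ω) :=
  {w | ∃ a ∈ A, ∀ i : Fin n, ∀ h : (i : ℕ) + j < n, w i = a ⟨(i : ℕ) + j, h⟩}

/-- `Uset A = Ω^n \ ⋃_{j=0}^{n-1} s^j(A) × Ω^j`. -/
def Uset {Ω : Type*} {n : ℕ} (A : Set (Fin n → Ω)) : Set (Fin n → Ω) :=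
  {u | ∀ j < n, u ∉ covers A j}

/-!
Write `p k` for the density of words whose length-`k` prefix is a suffix of a word of `A`
(the set `covers A (n - k)`, so `p 0 = 1` and `p n = α`) and `m k` for the density of words
with no such prefix of length `1, …, k` (so `m n = μ(U(A))`). Cutting a word counted by
`p (r + 1)` at its shortest such prefix, of length `i + 1`, leaves an independent window of
length `j = r - i` that again matches a suffix of a word of `A`. This renewal inequality
`p (r + 1) ≤ ∑_{i + j = r} (m i - m (i + 1)) p j` says exactly that the convolution `S = m * p`
is nonincreasing on `[0, n]`.

For `l ∈ (0, 1]` let `G = tilt p l`, i.e. `(1 - l X) G = (1 - X) p` as power series. Then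
`T = m * G` satisfies `T (r + 1) - l T r = S (r + 1) - S r ≤ 0`, so `T n ≤ l ^ n`. Choosing `l`
with `G n = 0` (intermediate value theorem) makes `G ≥ 0` on `[0, n]` and
`p n = (1 - l) ∑_{s < n} G s`, hence `m n p n ≤ (1 - l) T n ≤ (1 - l) l ^ n`, and
`n (1 - l) l ^ n ≤ (n / (n + 1)) ^ (n + 1)` by Bernoulli's inequality.
-/

open Finset

section Convolution

def conv (u v : ℕ → ℝ) (r : ℕ) : ℝ := ∑ x ∈ antidiagonal r, u x.1 * v x.2

def tilt (p : ℕ → ℝ) (l : ℝ) : ℕ → ℝ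
  | 0 => 1
  | s + 1 => l * tilt p l s + p (s + 1) - p s

variable {p m : ℕ → ℝ} {l : ℝ} {n : ℕ}

lemma one_sub_mul_sum_tilt (hp0 : p 0 = 1) (l : ℝ) (n : ℕ) :
    (1 - l) * ∑ s ∈ range n, tilt p l s = p n - tilt p l n := by
  induction n with
  | zero => simp [tilt, hp0]
  | succ n ih => rw [sum_range_succ, mul_add, ih, tilt]; ring

lemma conv_tilt_succ (hp0 : p 0 = 1) (m : ℕ → ℝ) (l : ℝ) (r : ℕ) :
    conv m (tilt p l) (r + 1) = l * conv m (tilt p l) r + (conv m p (r + 1) - conv m p r) := by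
  simp only [conv, Nat.sum_antidiagonal_succ', tilt, hp0, mul_sum]
  simp only [mul_add, mul_sub, sum_add_distrib, sum_sub_distrib, mul_left_comm _ l]
  ring

lemma conv_tilt_le_pow (hp0 : p 0 = 1) (hm0 : m 0 = 1) (hl : 0 ≤ l)
    (hS : ∀ r < n, conv m p (r + 1) ≤ conv m p r) : ∀ r ≤ n, conv m (tilt p l) r ≤ l ^ r := by
  intro r hr
  induction r with
  | zero => simp [conv, tilt, hm0]
  | succ r ih =>
    rw [conv_tilt_succ hp0, pow_succ']
    linarith [hS r hr, mul_le_mul_of_nonneg_left (ih (by omega)) hl]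

lemma tilt_nonneg (hl : 0 < l) (hp : ∀ s < n, p (s + 1) ≤ p s) (hroot : tilt p l n = 0) :
    ∀ s ≤ n, 0 ≤ tilt p l s := by
  intro s hs
  induction hs using Nat.decreasingInduction with
  | self => exact hroot.ge
  | of_succ s hs ih =>
    have h : l * tilt p l s = tilt p l (s + 1) + (p s - p (s + 1)) := by rw [tilt]; ring
    have := hp s hs
    exact nonneg_of_mul_nonneg_right (by linarith) hl

lemma continuous_tilt (p : ℕ → ℝ) (s : ℕ) : Continuous fun l => tilt p l s := by
  induction s with
  | zero => exact continuous_const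
  | succ s ih => simp only [tilt]; fun_prop

lemma mul_tilt_le (hp0 : p 0 = 1) (hl0 : 0 ≤ l) (hl1 : l ≤ 1) :
    ∀ s, (∀ k < s, p (k + 1) ≤ p k) → l * tilt p l s ≤ l ^ (s + 1) - (1 - p s) * l ^ s := by
  intro s
  induction s with
  | zero => simp [tilt, hp0]
  | succ s ih =>
    intro hp
    have hs := ih fun k hk => hp k (by omega)
    have hps := hp s (by omega)
    have hpow : l ^ (s + 1) ≤ l := pow_le_of_le_one hl0 hl1 (by omega)
    rw [tilt]
    linear_combination mul_le_mul_of_nonneg_left hs hl0 +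
      mul_le_mul_of_nonneg_left hpow (sub_nonneg.2 hps)

lemma exists_tilt_eq_zero (hp0 : p 0 = 1) (hp : ∀ s < n, p (s + 1) ≤ p s) (hpn0 : 0 ≤ p n)
    (hpn1 : p n < 1) : ∃ l, 0 < l ∧ l ≤ 1 ∧ tilt p l n = 0 := by
  set β := 1 - p n
  have hβ0 : 0 < β := by linarith
  have hβ1 : β ≤ 1 := by linarith
  have hlow : tilt p β n ≤ 0 := by
    have h := mul_tilt_le hp0 hβ0.le hβ1 n hp
    rw [pow_succ'] at h
    exact nonpos_of_mul_nonpos_right (by linarith) hβ0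
  have hhigh : 0 ≤ tilt p 1 n := by
    have h := one_sub_mul_sum_tilt hp0 1 n
    simp only [sub_self, zero_mul] at h
    linarith
  obtain ⟨l, ⟨hβl, hl1⟩, hroot⟩ :=
    intermediate_value_Icc hβ1 (continuous_tilt p n).continuousOn ⟨hlow, hhigh⟩
  exact ⟨l, hβ0.trans_le hβl, hl1, hroot⟩

lemma mul_sum_range_le_conv (hm : ∀ k ≤ n, m n ≤ m k) {v : ℕ → ℝ} (hv : ∀ s ≤ n, 0 ≤ v s) :
    m n * ∑ s ∈ range (n + 1), v s ≤ conv m v n := by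
  rw [conv, Nat.sum_antidiagonal_eq_sum_range_succ (fun i j => m i * v j), mul_sum,
    ← sum_range_reflect]
  refine sum_le_sum fun k hk => ?_
  rw [mem_range] at hk
  rw [show n + 1 - 1 - k = n - k by omega]
  exact mul_le_mul_of_nonneg_right (hm _ (by omega)) (hv _ (by omega))

lemma conv_succ_le_of_renewal (hm0 : m 0 = 1) {r : ℕ}
    (h : p (r + 1) ≤ ∑ x ∈ antidiagonal r, (m x.1 - m (x.1 + 1)) * p x.2) :
    conv m p (r + 1) ≤ conv m p r := by
  have hsplit : conv m p r = ∑ x ∈ antidiagonal r, (m x.1 - m (x.1 + 1)) * p x.2 +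
      ∑ x ∈ antidiagonal r, m (x.1 + 1) * p x.2 := by
    rw [conv, ← sum_add_distrib]
    exact sum_congr rfl fun _ _ => by ring
  rw [hsplit, conv, Nat.sum_antidiagonal_succ, hm0, one_mul]
  linarith

theorem exists_mul_le_of_conv_antitone (hm0 : m 0 = 1) (hp0 : p 0 = 1)
    (hm : ∀ k ≤ n, m n ≤ m k) (hp : ∀ s < n, p (s + 1) ≤ p s) (hpn0 : 0 ≤ p n) (hpn1 : p n < 1)
    (hS : ∀ r < n, conv m p (r + 1) ≤ conv m p r) :
    ∃ l, 0 ≤ l ∧ m n * p n ≤ (1 - l) * l ^ n := by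
  obtain ⟨l, hl0, hl1, hroot⟩ := exists_tilt_eq_zero hp0 hp hpn0 hpn1
  have hpn : p n = (1 - l) * ∑ s ∈ range (n + 1), tilt p l s := by
    rw [sum_range_succ, hroot, add_zero, one_sub_mul_sum_tilt hp0, hroot, sub_zero]
  refine ⟨l, hl0.le, ?_⟩
  calc m n * p n = (1 - l) * (m n * ∑ s ∈ range (n + 1), tilt p l s) := by rw [hpn]; ring
    _ ≤ (1 - l) * conv m (tilt p l) n :=
      mul_le_mul_of_nonneg_left (mul_sum_range_le_conv hm (tilt_nonneg hl0 hp hroot)) (by linarith)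
    _ ≤ (1 - l) * l ^ n :=
      mul_le_mul_of_nonneg_left (conv_tilt_le_pow hp0 hm0 hl0.le hS n le_rfl) (by linarith)

end Convolution

lemma natCast_mul_one_sub_mul_pow_le {l : ℝ} (hl : 0 ≤ l) (n : ℕ) :
    n * ((1 - l) * l ^ n) ≤ ((n : ℝ) / (n + 1)) ^ (n + 1) := by
  have hc : 0 ≤ (n : ℝ) / (n + 1) := by positivity
  have h := pow_add_mul_le_add_pow hl (b := n / (n + 1) - l) (by linarith) (n + 1)
  rw [add_sub_cancel] at h
  refine (le_of_eq ?_).trans h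
  rw [Nat.add_sub_cancel]
  push_cast
  field_simp
  ring

lemma Fin.val_add_ofNat_of_lt {n : ℕ} [NeZero n] {i : Fin n} {k : ℕ} (h : (i : ℕ) + k < n) :
    ((i + Fin.ofNat n k : Fin n) : ℕ) = i + k := by
  rw [Fin.val_add, Fin.val_ofNat, Nat.mod_eq_of_lt (by omega : k < n), Nat.mod_eq_of_lt h]

lemma dependsOn_mem_of_forall {ι : Type*} {α : ι → Type*} {F : Set (∀ i, α i)} {s : Set ι}
    (h : ∀ x y, (∀ i ∈ s, x i = y i) → x ∈ F → y ∈ F) : DependsOn (· ∈ F) s :=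
  fun x y hxy => propext ⟨h x y hxy, h y x fun i hi => (hxy i hi).symm⟩

theorem card_inter_mul_card_eq_of_dependsOn {ι β : Type*} (p : ι → Prop) [DecidablePred p]
    {F G : Set (ι → β)} (hF : DependsOn (· ∈ F) {i | p i}) (hG : DependsOn (· ∈ G) {i | ¬p i}) :
    Nat.card ↥(F ∩ G) * Nat.card (ι → β) = Nat.card F * Nat.card G := by
  let merge (x y : ι → β) : ι → β := fun i => if p i then x i else y i
  have hmF : ∀ x y, x ∈ F → merge x y ∈ F := fun x y hx =>
    (hF fun i (hi : p i) => by simp [merge, hi]).mp hx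
  have hmG : ∀ x y, y ∈ G → merge x y ∈ G := fun x y hy =>
    (hG fun i (hi : ¬p i) => by simp [merge, hi]).mp hy
  let e : ↥F × ↥G ≃ ↥(F ∩ G) × (ι → β) :=
    { toFun := fun xy => (⟨merge xy.1 xy.2, hmF _ _ xy.1.2, hmG _ _ xy.2.2⟩, merge xy.2 xy.1)
      invFun := fun zy => (⟨merge zy.1 zy.2, hmF _ _ zy.1.2.1⟩, ⟨merge zy.2 zy.1, hmG _ _ zy.1.2.2⟩)
      left_inv := fun xy => by ext <;> simp only [merge] <;> split_ifs <;> rfl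
      right_inv := fun zy => by ext <;> simp only [merge] <;> split_ifs <;> rfl }
  rw [← Nat.card_prod, ← Nat.card_prod, Nat.card_congr e]

section Words

variable {Ω : Type*} [Fintype Ω] {n : ℕ}

lemma meas_nonneg (S : Set (Fin n → Ω)) : 0 ≤ meas S := by
  unfold meas
  positivity

lemma meas_mono {S T : Set (Fin n → Ω)} (h : S ⊆ T) : meas S ≤ meas T := by
  unfold meas
  gcongr
  exact Nat.card_mono (Set.toFinite T) h

lemma meas_union_le (S T : Set (Fin n → Ω)) : meas (S ∪ T) ≤ meas S + meas T := by
  unfold meas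
  rw [← add_div]
  gcongr
  simp only [Nat.card_coe_set_eq]
  exact_mod_cast Set.ncard_union_le S T

lemma meas_biUnion_le {ι : Type*} (s : Finset ι) (f : ι → Set (Fin n → Ω)) :
    meas (⋃ i ∈ s, f i) ≤ ∑ i ∈ s, meas (f i) := by
  classical
  induction s using Finset.induction_on with
  | empty => simp [meas]
  | insert a s ha ih =>
    rw [Finset.set_biUnion_insert, sum_insert ha]
    exact (meas_union_le _ _).trans (by linarith)

lemma meas_inter_add_meas_diff (S T : Set (Fin n → Ω)) : meas (S ∩ T) + meas (S \ T) = meas S := by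
  unfold meas
  rw [← add_div]
  simp only [Nat.card_coe_set_eq]
  rw [← Nat.cast_add, Set.ncard_inter_add_ncard_sdiff_eq_ncard]

lemma meas_univ [Nonempty Ω] : meas (Set.univ : Set (Fin n → Ω)) = 1 := by
  unfold meas
  rw [Nat.card_univ, Nat.card_eq_fintype_card, Fintype.card_fun, Fintype.card_fin]
  push_cast
  exact div_self (by positivity)

lemma meas_preimage_comp_perm (σ : Equiv.Perm (Fin n)) (S : Set (Fin n → Ω)) :
    meas ((· ∘ σ) ⁻¹' S) = meas S := by
  have hσ : Function.Bijective fun w : Fin n → Ω => w ∘ σ := σ.bijective.comp_right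
  unfold meas
  simp only [Nat.card_coe_set_eq]
  rw [Set.ncard_preimage_of_injective_subset_range hσ.1 (by simp [hσ.2.range_eq])]

lemma meas_inter_of_dependsOn (k : ℕ) {F G : Set (Fin n → Ω)}
    (hF : DependsOn (· ∈ F) {i : Fin n | (i : ℕ) < k})
    (hG : DependsOn (· ∈ G) {i : Fin n | k ≤ (i : ℕ)}) :
    meas (F ∩ G) = meas F * meas G := by
  have h := card_inter_mul_card_eq_of_dependsOn (fun i : Fin n => (i : ℕ) < k) hF
    (hG.mono fun i (hi : k ≤ (i : ℕ)) => not_lt.2 hi)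
  rw [Nat.card_eq_fintype_card (α := Fin n → Ω), Fintype.card_fun, Fintype.card_fin] at h
  unfold meas
  rcases eq_or_ne ((Fintype.card Ω : ℝ) ^ n) 0 with h0 | h0
  · simp [h0]
  · field_simp
    exact_mod_cast h

end Words

section Covers

variable {Ω : Type*} {n : ℕ} (A : Set (Fin n → Ω))

def coversFrom (k j : ℕ) : Set (Fin n → Ω) :=
  {w | ∃ a ∈ A, ∀ i : Fin n, k ≤ (i : ℕ) → ∀ h : (i : ℕ) + j < n, w i = a ⟨(i : ℕ) + j, h⟩}

def noHit (k : ℕ) : Set (Fin n → Ω) := {u | ∀ i < k, u ∉ covers A (n - (i + 1))}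

lemma covers_subset_coversFrom (k j : ℕ) : covers A j ⊆ coversFrom A k j :=
  fun _ ⟨a, ha, hw⟩ => ⟨a, ha, fun i _ => hw i⟩

lemma covers_zero : covers A 0 = A := by
  ext w
  refine ⟨fun ⟨a, ha, hw⟩ => ?_, fun hw => ⟨w, hw, fun _ _ => rfl⟩⟩
  rwa [show w = a from funext fun i => hw i i.isLt]

lemma covers_self_of_nonempty (hA : A.Nonempty) : covers A n = Set.univ := by
  obtain ⟨a, ha⟩ := hA
  exact Set.eq_univ_of_forall fun w => ⟨a, ha, fun i h => absurd h (by omega)⟩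

lemma dependsOn_covers (j : ℕ) : DependsOn (· ∈ covers A j) {i : Fin n | (i : ℕ) < n - j} :=
  dependsOn_mem_of_forall fun x y hxy ⟨a, ha, hx⟩ =>
    ⟨a, ha, fun i h => (hxy i (show (i : ℕ) < n - j by omega)).symm.trans (hx i h)⟩

lemma dependsOn_coversFrom (k j : ℕ) : DependsOn (· ∈ coversFrom A k j) {i : Fin n | k ≤ (i : ℕ)} :=
  dependsOn_mem_of_forall fun _ _ hxy ⟨a, ha, hx⟩ =>
    ⟨a, ha, fun i hi h => (hxy i hi).symm.trans (hx i hi h)⟩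

lemma preimage_rotate_covers [NeZero n] (k j : ℕ) :
    (· ∘ Equiv.addRight (Fin.ofNat n k)) ⁻¹' covers A (j + k) = coversFrom A k j := by
  ext w
  simp only [Set.mem_preimage, covers, coversFrom, Set.mem_ofPred_eq, Function.comp_apply,
    Equiv.coe_addRight]
  refine exists_congr fun a => and_congr_right fun _ => ⟨fun hw i hi h => ?_, fun hw i h => ?_⟩
  · have hi' : (⟨i - k, by omega⟩ + Fin.ofNat n k : Fin n) = i :=
      Fin.ext (by rw [Fin.val_add_ofNat_of_lt (by simp; omega)]; simp; omega)
    have := hw ⟨i - k, by omega⟩ (by simp; omega)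
    rw [hi'] at this
    exact this.trans (congrArg a (Fin.ext (by simp; omega)))
  · have hval := Fin.val_add_ofNat_of_lt (i := i) (k := k) (by omega)
    rw [hw (i + Fin.ofNat n k) (by omega) (by omega)]
    exact congrArg a (Fin.ext (by dsimp only; rw [hval]; omega))

lemma noHit_zero : noHit A 0 = Set.univ := by simp [noHit]

lemma noHit_succ (k : ℕ) : noHit A (k + 1) = noHit A k \ covers A (n - (k + 1)) := by
  ext u
  simp only [noHit, Set.mem_ofPred_eq, Set.mem_sdiff, Nat.forall_lt_succ_right]

lemma noHit_anti {i k : ℕ} (h : i ≤ k) : noHit A k ⊆ noHit A i :=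
  fun _ hu j hj => hu j (by omega)

lemma noHit_self : noHit A n = Uset A := by
  ext u
  refine ⟨fun hu j hj => ?_, fun hu i hi => hu _ (by omega)⟩
  simpa [show n - (n - 1 - j + 1) = j by omega] using hu (n - 1 - j) (by omega)

lemma dependsOn_noHit_inter_covers (k : ℕ) :
    DependsOn (· ∈ noHit A k ∩ covers A (n - (k + 1))) {i : Fin n | (i : ℕ) < k + 1} := by
  refine dependsOn_mem_of_forall fun x y hxy ⟨hx, hxc⟩ => ⟨fun i hi hy => hx i hi ?_, ?_⟩
  · exact (dependsOn_covers A (n - (i + 1)) fun z hz => hxy z (by simp at hz ⊢; omega)).mpr hy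
  · exact (dependsOn_covers A (n - (k + 1)) fun z hz => hxy z (by simp at hz ⊢; omega)).mp hxc

lemma covers_subset_biUnion (r : ℕ) :
    covers A (n - (r + 1)) ⊆ ⋃ x ∈ antidiagonal r,
      noHit A x.1 ∩ covers A (n - (x.1 + 1)) ∩ coversFrom A (x.1 + 1) (n - (r + 1)) := by
  classical
  intro w hw
  have hex : ∃ i, w ∈ covers A (n - (i + 1)) := ⟨r, hw⟩
  refine Set.mem_iUnion₂.2 ⟨(Nat.find hex, r - Nat.find hex), ?_, ⟨?_, Nat.find_spec hex⟩,
    covers_subset_coversFrom A _ _ hw⟩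
  · have := Nat.find_min' hex hw
    rw [HasAntidiagonal.mem_antidiagonal]; omega
  · exact fun i hi => Nat.find_min hex hi

end Covers

section Renewal

variable {Ω : Type*} [Fintype Ω] {n : ℕ} (A : Set (Fin n → Ω))

lemma meas_coversFrom [NeZero n] (k j : ℕ) : meas (coversFrom A k j) = meas (covers A (j + k)) := by
  rw [← preimage_rotate_covers, meas_preimage_comp_perm]

lemma meas_noHit_inter_covers (k : ℕ) :
    meas (noHit A k ∩ covers A (n - (k + 1))) = meas (noHit A k) - meas (noHit A (k + 1)) := by
  rw [noHit_succ, ← meas_inter_add_meas_diff (noHit A k) (covers A (n - (k + 1)))]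
  ring

lemma meas_covers_le_sum_antidiagonal [NeZero n] {r : ℕ} (hr : r < n) :
    meas (covers A (n - (r + 1))) ≤ ∑ x ∈ antidiagonal r,
      (meas (noHit A x.1) - meas (noHit A (x.1 + 1))) * meas (covers A (n - x.2)) := by
  refine (meas_mono (covers_subset_biUnion A r)).trans
    ((meas_biUnion_le _ _).trans (le_of_eq (sum_congr rfl fun x hx => ?_)))
  rw [HasAntidiagonal.mem_antidiagonal] at hx
  rw [meas_inter_of_dependsOn (x.1 + 1) (dependsOn_noHit_inter_covers A x.1)
    (dependsOn_coversFrom A _ _), meas_noHit_inter_covers, meas_coversFrom,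
    show n - (r + 1) + (x.1 + 1) = n - x.2 by omega]

lemma meas_covers_succ_le [NeZero n] {s : ℕ} (hs : s < n) :
    meas (covers A (n - (s + 1))) ≤ meas (covers A (n - s)) := by
  calc meas (covers A (n - (s + 1))) ≤ meas (coversFrom A 1 (n - (s + 1))) :=
        meas_mono (covers_subset_coversFrom A 1 _)
    _ = meas (covers A (n - s)) := by rw [meas_coversFrom, show n - (s + 1) + 1 = n - s by omega]

end Renewal

theorem natCast_mul_meas_uset_mul_meas_le {Ω : Type*} [Fintype Ω] [Nonempty Ω] {n : ℕ} [NeZero n]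
    (A : Set (Fin n → Ω)) (hA : A.Nonempty) (hA1 : meas A < 1) :
    n * (meas (Uset A) * meas A) ≤ ((n : ℝ) / (n + 1)) ^ (n + 1) := by
  have hm0 : meas (noHit A 0) = 1 := by rw [noHit_zero, meas_univ]
  obtain ⟨l, hl, hmul⟩ := exists_mul_le_of_conv_antitone (n := n)
    (m := fun k => meas (noHit A k)) (p := fun k => meas (covers A (n - k)))
    hm0 (by simp only [Nat.sub_zero, covers_self_of_nonempty A hA, meas_univ])
    (fun k hk => meas_mono (noHit_anti A hk)) (fun s hs => meas_covers_succ_le A hs)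
    (meas_nonneg _) (by rwa [Nat.sub_self, covers_zero])
    (fun r hr => conv_succ_le_of_renewal hm0 (meas_covers_le_sum_antidiagonal A hr))
  simp only [noHit_self, Nat.sub_self, covers_zero] at hmul
  exact (mul_le_mul_of_nonneg_left hmul n.cast_nonneg).trans (natCast_mul_one_sub_mul_pow_le hl n)

theorem stmt0 {Ω : Type*} [Fintype Ω] [Nonempty Ω] (n : ℕ) (hn : 1 ≤ n)
    (A : Set (Fin n → Ω)) (α : ℝ) (hα : meas A = α) (h0 : 0 < α) (h1 : α < 1) :
    meas (Uset A) ≤ ((n : ℝ) / (n + 1)) ^ (n + 1) * (1 / (α * n)) := by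
  have : NeZero n := ⟨by omega⟩
  have hA : A.Nonempty := by
    by_contra! hA
    simp [← hα, hA, meas] at h0
  have key := natCast_mul_meas_uset_mul_meas_le A hA (hα ▸ h1)
  rw [hα] at key
  have hn' : (0 : ℝ) < n := by exact_mod_cast hn
  rw [mul_one_div, le_div_iff₀ (by positivity)]
  linarith
end

section
/- Let n ≥ 1 and let γ_0, γ_1, …, γ_n and δ_1, …, δ_n be nonnegative reals satisfying: γ_0 = 1; γ_n ≤ γ_{n−1} ≤ … ≤ γ_1 ≤ 1; δ_1 + … + δ_n = 1 − α for some α ∈ (0,1); and γ_j ≤ Σ_{i=0}^{j−1} γ_i δ_{j−i} for all j = 1,…,n. Then α·γ_n ≤ (1/n)·(n/(n+1))^{n+1}. -/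
open Finset

/-!
Let `z` be the coefficient sequence of `1 / ((1 - x) Γ(x))`, where `Γ(x) = ∑ γ i x^i`. Since
`(1 - x) Γ(x) = 1 - ∑ D i x^(i+1)` with `D i = γ i - γ (i+1) ≥ 0`, `z` is a renewal sequence
for `D`, hence nonnegative, and the recursion for `γ` together with `∑ δ = 1 - α` gives
`z m ≥ α` for `1 ≤ m ≤ n`. Comparing the coefficients of degree at most `n` in
`z(x) (1 - x) Γ(x) = 1` yields, for `x ≥ 1` with `Q(x) = ∑_{i<n} D i x^(i+1) ≤ 1`,
`α γ n x^(n+1) ≤ (x - 1) + (1 - Q(x)) (1 - (1 - α) x)`.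
At `x = 1 / (1 - α)`, or at a root of `Q = 1` below it, the last term vanishes, and Bernoulli's
inequality bounds `(x - 1) / x^(n+1)` by `(1 / n) (n / (n + 1))^(n+1)`.
-/

/-- The coefficients of `1 / ((1 - x) Γ(x))`, `Γ(x) = ∑ γ i x^i`, when `γ 0 = 1`. -/
noncomputable def onesDiv (γ : ℕ → ℝ) (r : ℕ) : ℝ :=
  1 - ∑ t : Fin r, onesDiv γ t * γ (r - t)

theorem onesDiv_eq (γ : ℕ → ℝ) (r : ℕ) :
    onesDiv γ r = 1 - ∑ t ∈ range r, onesDiv γ t * γ (r - t) := by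
  rw [onesDiv, Fin.sum_univ_eq_sum_range (fun t => onesDiv γ t * γ (r - t))]

section

variable {γ : ℕ → ℝ} {n : ℕ} {α : ℝ}

theorem onesDiv_zero : onesDiv γ 0 = 1 := by
  rw [onesDiv_eq, sum_range_zero, sub_zero]

theorem sum_onesDiv_mul (hγ0 : γ 0 = 1) (r : ℕ) :
    ∑ t ∈ range (r + 1), onesDiv γ t * γ (r - t) = 1 := by
  rw [sum_range_succ, Nat.sub_self, hγ0, mul_one, onesDiv_eq γ r]
  ring

theorem onesDiv_succ (hγ0 : γ 0 = 1) (r : ℕ) :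
    onesDiv γ (r + 1) = ∑ t ∈ range (r + 1), onesDiv γ t * (γ (r - t) - γ (r - t + 1)) := by
  rw [onesDiv_eq, ← sum_onesDiv_mul hγ0 r, ← sum_sub_distrib]
  refine sum_congr rfl fun t ht => ?_
  rw [show r + 1 - t = r - t + 1 by have := mem_range.mp ht; omega]
  ring

theorem onesDiv_nonneg (hγ0 : γ 0 = 1) (hmono : ∀ j < n, γ (j + 1) ≤ γ j) :
    ∀ r ≤ n, 0 ≤ onesDiv γ r := by
  intro r
  induction r using Nat.strong_induction_on with
  | _ r ih =>
    intro hr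
    cases r with
    | zero => rw [onesDiv_zero]; exact zero_le_one
    | succ r =>
      rw [onesDiv_succ hγ0]
      refine sum_nonneg fun t ht => ?_
      have ht : t < r + 1 := mem_range.mp ht
      exact mul_nonneg (ih t ht (by omega)) (sub_nonneg.2 (hmono _ (by omega)))

theorem le_onesDiv {δ : ℕ → ℝ} (hγ0 : γ 0 = 1)
    (hmono : ∀ j < n, γ (j + 1) ≤ γ j) (hδnn : ∀ i ∈ Icc 1 n, 0 ≤ δ i)
    (hsum : ∑ i ∈ Icc 1 n, δ i = 1 - α)
    (hrec : ∀ j, 1 ≤ j → j ≤ n → γ j ≤ ∑ i ∈ range j, γ i * δ (j - i))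
    {m : ℕ} (hm : 1 ≤ m) (hmn : m ≤ n) : α ≤ onesDiv γ m := by
  have hrenewal : 1 - onesDiv γ m ≤ ∑ r ∈ range m, δ (m - r) := calc
    1 - onesDiv γ m = ∑ t ∈ range m, onesDiv γ t * γ (m - t) := by rw [onesDiv_eq]; ring
    _ ≤ ∑ t ∈ range m, ∑ i ∈ range (m - t), onesDiv γ t * (γ i * δ (m - t - i)) := by
      refine sum_le_sum fun t ht => ?_
      have ht : t < m := mem_range.mp ht
      rw [← mul_sum]
      exact mul_le_mul_of_nonneg_left (hrec _ (by omega) (by omega))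
        (onesDiv_nonneg hγ0 hmono t (by omega))
    _ = ∑ r ∈ range m, ∑ t ∈ range (r + 1), onesDiv γ t * γ (r - t) * δ (m - r) := by
      rw [← sum_range_diag_flip]
      refine sum_congr rfl fun r hr => sum_congr rfl fun t ht => ?_
      have hr : r < m := mem_range.mp hr
      have ht : t < r + 1 := mem_range.mp ht
      rw [show m - t - (r - t) = m - r by omega, mul_assoc]
    _ = ∑ r ∈ range m, δ (m - r) := by
      simp only [← sum_mul, sum_onesDiv_mul hγ0, one_mul]
  have hpartial : ∑ r ∈ range m, δ (m - r) ≤ 1 - α := by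
    rw [← hsum, range_eq_Ico, sum_Ico_reflect δ 0 (Nat.le_succ m), Nat.add_sub_cancel_left]
    refine sum_le_sum_of_subset_of_nonneg (fun i hi => ?_) fun i hi _ => hδnn i hi
    simp only [mem_Ico, mem_Icc] at hi ⊢
    omega
  linarith

end

/-- The coefficients of degree at most `n` of `(∑ c j x^j) (1 - ∑ D i x^(i+1))`. -/
theorem sum_mul_pow_mul_one_sub_sum (c D : ℕ → ℝ) (x : ℝ) (n : ℕ) :
    ∑ j ∈ range (n + 1), c j * x ^ j * (1 - ∑ i ∈ range (n - j), D i * x ^ (i + 1)) =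
      c 0 + ∑ r ∈ range n, (c (r + 1) - ∑ t ∈ range (r + 1), c t * D (r - t)) * x ^ (r + 1) := by
  have hflip : ∑ j ∈ range (n + 1), c j * x ^ j * ∑ i ∈ range (n - j), D i * x ^ (i + 1)
      = ∑ r ∈ range n, (∑ t ∈ range (r + 1), c t * D (r - t)) * x ^ (r + 1) := by
    rw [sum_range_succ, Nat.sub_self, sum_range_zero, mul_zero, add_zero]
    simp only [mul_sum, sum_mul]
    rw [← sum_range_diag_flip]
    refine sum_congr rfl fun r _ => sum_congr rfl fun t ht => ?_
    rw [show r + 1 = t + (r - t + 1) by have := mem_range.mp ht; omega, pow_add]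
    ring_nf
  simp only [mul_sub, mul_one, sum_sub_distrib, hflip, sum_range_succ' (fun j => c j * x ^ j),
    pow_zero, sub_mul]
  ring

noncomputable def diffSum (γ : ℕ → ℝ) (n : ℕ) (x : ℝ) : ℝ :=
  ∑ i ∈ range n, (γ i - γ (i + 1)) * x ^ (i + 1)

theorem sum_range_succ_sub_rev (γ : ℕ → ℝ) (r : ℕ) :
    ∑ t ∈ range (r + 1), (γ (r - t) - γ (r - t + 1)) = γ 0 - γ (r + 1) := by
  rw [← sum_range_sub' γ (r + 1), ← sum_range_reflect _ (r + 1)]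
  refine sum_congr rfl fun t ht => ?_
  rw [show r - (r + 1 - 1 - t) = t by have := mem_range.mp ht; omega]

theorem sub_one_mul_sum_range_succ (γ : ℕ → ℝ) (n : ℕ) (x : ℝ) :
    (x - 1) * ∑ i ∈ range (n + 1), γ i * x ^ i = γ n * x ^ (n + 1) - γ 0 + diffSum γ n x := by
  induction n with
  | zero => simp only [zero_add, sum_range_one, pow_zero, mul_one, diffSum, sum_range_zero]; ring
  | succ n ih =>
    rw [sum_range_succ, mul_add, ih, diffSum, diffSum, sum_range_succ]
    ring

section

variable {γ : ℕ → ℝ} {n : ℕ} {α x : ℝ}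

theorem mul_sum_pow_add_mul_le_one (hγ0 : γ 0 = 1)
    (hmono : ∀ j < n, γ (j + 1) ≤ γ j) (hz : ∀ m, 1 ≤ m → m ≤ n → α ≤ onesDiv γ m)
    (hx : 0 ≤ x) (hQ : diffSum γ n x ≤ 1) :
    α * ∑ i ∈ range (n + 1), γ i * x ^ i + (1 - α) * (1 - diffSum γ n x) ≤ 1 := by
  have hK_nonneg : ∀ j, 0 ≤ 1 - diffSum γ (n - j) x := fun j => by
    refine sub_nonneg.2 (le_trans ?_ hQ)
    refine sum_le_sum_of_subset_of_nonneg (range_subset_range.2 (Nat.sub_le n j)) fun i hi _ => ?_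
    exact mul_nonneg (sub_nonneg.2 (hmono i (mem_range.mp hi))) (pow_nonneg hx _)
  have hz_eq : ∑ j ∈ range (n + 1), onesDiv γ j * x ^ j * (1 - diffSum γ (n - j) x) = 1 := by
    simp only [diffSum]
    rw [sum_mul_pow_mul_one_sub_sum]
    simp [← onesDiv_succ hγ0, onesDiv_zero]
  have hone_eq : ∑ j ∈ range (n + 1), x ^ j * (1 - diffSum γ (n - j) x) =
      ∑ i ∈ range (n + 1), γ i * x ^ i := by
    have h := sum_mul_pow_mul_one_sub_sum (fun _ => 1) (fun i => γ i - γ (i + 1)) x n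
    simp only [one_mul, sum_range_succ_sub_rev, hγ0, sub_sub_cancel] at h
    rw [sum_range_succ' (fun i => γ i * x ^ i), hγ0, pow_zero, mul_one]
    exact h.trans (add_comm _ _)
  have hsplit : ∑ j ∈ range (n + 1), (onesDiv γ j - α) * x ^ j * (1 - diffSum γ (n - j) x) =
      1 - α * ∑ i ∈ range (n + 1), γ i * x ^ i := calc
    _ = ∑ j ∈ range (n + 1), onesDiv γ j * x ^ j * (1 - diffSum γ (n - j) x)
        - α * ∑ j ∈ range (n + 1), x ^ j * (1 - diffSum γ (n - j) x) := by
      rw [mul_sum, ← sum_sub_distrib]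
      exact sum_congr rfl fun j _ => by ring
    _ = _ := by rw [hz_eq, hone_eq]
  have hlower : (1 - α) * (1 - diffSum γ n x) ≤
      ∑ j ∈ range (n + 1), (onesDiv γ j - α) * x ^ j * (1 - diffSum γ (n - j) x) := by
    rw [sum_range_succ', onesDiv_zero, pow_zero, mul_one, Nat.sub_zero]
    refine le_add_of_nonneg_left (sum_nonneg fun j hj => mul_nonneg (mul_nonneg ?_ ?_) ?_)
    · exact sub_nonneg.2 (hz _ le_add_self (mem_range.mp hj))
    · exact pow_nonneg hx _
    · exact hK_nonneg _
  linarith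

theorem mul_pow_le_of_diffSum_le (hγ0 : γ 0 = 1)
    (hmono : ∀ j < n, γ (j + 1) ≤ γ j) (hz : ∀ m, 1 ≤ m → m ≤ n → α ≤ onesDiv γ m)
    (hx : 1 ≤ x) (hQ : diffSum γ n x ≤ 1) :
    α * γ n * x ^ (n + 1) ≤ x - 1 + (1 - diffSum γ n x) * (1 - (1 - α) * x) := by
  have h := mul_le_mul_of_nonneg_left
    (mul_sum_pow_add_mul_le_one hγ0 hmono hz (by linarith) hQ) (sub_nonneg.2 hx)
  have htel := sub_one_mul_sum_range_succ γ n x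
  rw [hγ0] at htel
  linear_combination h - α * htel

end

theorem exists_mem_Icc_le_and_eq_or_eq_right {f : ℝ → ℝ} {a b c : ℝ} (hab : a ≤ b)
    (hf : ContinuousOn f (Set.Icc a b)) (ha : f a ≤ c) :
    ∃ x ∈ Set.Icc a b, f x ≤ c ∧ (f x = c ∨ x = b) := by
  rcases le_or_gt (f b) c with hb | hb
  · exact ⟨b, Set.right_mem_Icc.2 hab, hb, Or.inr rfl⟩
  · obtain ⟨x, hx, hfx⟩ := intermediate_value_Icc hab hf ⟨ha, hb.le⟩
    exact ⟨x, hx, hfx.le, Or.inl hfx⟩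

theorem sub_one_le_pow_mul {n : ℕ} (hn : 0 < n) {x : ℝ} (hx : 0 ≤ x) :
    x - 1 ≤ x ^ (n + 1) * ((1 / n) * ((n : ℝ) / (n + 1)) ^ (n + 1)) := by
  have hn' : (0 : ℝ) < n := by exact_mod_cast hn
  have hbernoulli := one_add_mul_le_pow (a := (n * x - (n + 1)) / (n + 1))
    (by rw [le_div_iff₀ (by positivity)]; nlinarith) (n + 1)
  rw [show 1 + (n * x - (n + 1)) / (n + 1) = (n : ℝ) / (n + 1) * x by field_simp; ring,
    mul_pow] at hbernoulli
  push_cast at hbernoulli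
  calc x - 1 = 1 / n * (1 + (n + 1) * ((n * x - (n + 1)) / (n + 1))) := by field_simp; ring
    _ ≤ 1 / n * (((n : ℝ) / (n + 1)) ^ (n + 1) * x ^ (n + 1)) := by gcongr
    _ = _ := by ring

theorem stmt3_general (n : ℕ) (hn : 1 ≤ n) (α : ℝ) (h0 : 0 < α) (h1 : α < 1)
    (γ δ : ℕ → ℝ)
    (hδnn : ∀ i ∈ Icc 1 n, 0 ≤ δ i)
    (hγ0 : γ 0 = 1)
    (hmono : ∀ j < n, γ (j + 1) ≤ γ j)
    (hsum : ∑ i ∈ Icc 1 n, δ i = 1 - α)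
    (hrec : ∀ j, 1 ≤ j → j ≤ n → γ j ≤ ∑ i ∈ Finset.range j, γ i * δ (j - i)) :
    α * γ n ≤ (1 / n) * ((n : ℝ) / (n + 1)) ^ (n + 1) := by
  rcases le_or_gt (γ n) 0 with hγn | hγn
  · have : 0 ≤ (1 / n) * ((n : ℝ) / (n + 1)) ^ (n + 1) := by positivity
    nlinarith
  have hQ1 : diffSum γ n 1 ≤ 1 := by
    simp only [diffSum, one_pow, mul_one, sum_range_sub', hγ0]
    linarith
  have hb : (1 : ℝ) ≤ (1 - α)⁻¹ := (one_le_inv₀ (by linarith)).2 (by linarith)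
  obtain ⟨x, ⟨hx, -⟩, hQx, hroot⟩ :=
    exists_mem_Icc_le_and_eq_or_eq_right hb (by unfold diffSum; fun_prop) hQ1
  have hvanish : (1 - diffSum γ n x) * (1 - (1 - α) * x) = 0 := by
    rcases hroot with hroot | rfl
    · rw [hroot, sub_self, zero_mul]
    · rw [mul_inv_cancel₀ (by linarith), sub_self, mul_zero]
  have hmain := mul_pow_le_of_diffSum_le hγ0 hmono
    (fun m hm hmn => le_onesDiv hγ0 hmono hδnn hsum hrec hm hmn) hx hQx
  rw [hvanish, add_zero] at hmain
  have hxpow : 0 < x ^ (n + 1) := by positivity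
  nlinarith [sub_one_le_pow_mul hn (by linarith : (0 : ℝ) ≤ x)]

theorem stmt3 (n : ℕ) (hn : 1 ≤ n) (α : ℝ) (h0 : 0 < α) (h1 : α < 1)
    (γ δ : ℕ → ℝ)
    (hγnn : ∀ i, i ≤ n → 0 ≤ γ i)
    (hδnn : ∀ i ∈ Icc 1 n, 0 ≤ δ i)
    (hγ0 : γ 0 = 1)
    (hmono : ∀ j < n, γ (j + 1) ≤ γ j)
    (hsum : ∑ i ∈ Icc 1 n, δ i = 1 - α)
    (hrec : ∀ j, 1 ≤ j → j ≤ n → γ j ≤ ∑ i ∈ Finset.range j, γ i * δ (j - i)) :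
    α * γ n ≤ (1 / n) * ((n : ℝ) / (n + 1)) ^ (n + 1) :=
  stmt3_general n hn α h0 h1 γ δ hδnn hγ0 hmono hsum hrec
end

section
/- Let Ω be a finite set and S ⊆ Ω be a nonempty proper subset with |S|/|Ω| = p, and let A = Ω^{n−1} × S ⊆ Ω^n. Then U(A) = (Ω \ S)^n, and hence μ(U(A)) = (1 − p)^n = (1 − μ(A))^n. -/
/-! A word lies in `s^j(A) × Ω^j` exactly when its letter at position `n - 1 - j` is in `S`, so
`U(A)` consists of the words avoiding `S` at every position; the measure of such a coordinatewise
condition is the product of the densities of its coordinate sets. -/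

lemma Nat.card_setOf_forall_mem {ι Ω : Type*} [Fintype ι] (t : ι → Set Ω) :
    Nat.card {w : ι → Ω | ∀ i, w i ∈ t i} = ∏ i, Nat.card (t i) :=
  (Nat.card_congr Equiv.subtypePiEquivPi).trans Nat.card_pi

lemma meas_setOf_forall_mem {Ω : Type*} [Fintype Ω] {n : ℕ} (t : Fin n → Set Ω) :
    meas {w : Fin n → Ω | ∀ i, w i ∈ t i} =
      ∏ i, (Nat.card (t i) : ℝ) / Fintype.card Ω := by
  rw [meas, Nat.card_setOf_forall_mem, Finset.prod_div_distrib, Finset.prod_const,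
    Finset.card_univ, Fintype.card_fin, Nat.cast_prod]

lemma meas_setOf_apply_mem {Ω : Type*} [Fintype Ω] [Nonempty Ω] {n : ℕ} (k : Fin n) (S : Set Ω) :
    meas {w : Fin n → Ω | w k ∈ S} = (Nat.card S : ℝ) / Fintype.card Ω := by
  classical
  have hpi : {w : Fin n → Ω | w k ∈ S} =
      {w | ∀ i, w i ∈ Function.update (fun _ => Set.univ) k S i} := by
    ext w
    refine ⟨fun h i => ?_, fun h => by simpa using h k⟩
    rcases eq_or_ne i k with rfl | hi
    · simpa using h
    · simp [hi]
  rw [hpi, meas_setOf_forall_mem, Finset.prod_eq_single k (fun i _ hi => ?_) (by simp),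
    Function.update_self]
  rw [Function.update_of_ne hi, Nat.card_univ, Nat.card_eq_fintype_card,
    div_self (Nat.cast_ne_zero.2 Fintype.card_ne_zero)]

lemma card_compl_div_card {Ω : Type*} [Fintype Ω] [Nonempty Ω] (S : Set Ω) :
    (Nat.card (Sᶜ : Set Ω) : ℝ) / Fintype.card Ω = 1 - (Nat.card S : ℝ) / Fintype.card Ω := by
  have hsum := Set.ncard_add_ncard_compl S
  rw [Nat.card_eq_fintype_card] at hsum
  rw [Nat.card_coe_set_eq, Nat.card_coe_set_eq, eq_sub_iff_add_eq, ← add_div,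
    div_eq_one_iff_eq (Nat.cast_ne_zero.2 Fintype.card_ne_zero)]
  exact_mod_cast (add_comm _ _).trans hsum

lemma meas_setOf_forall_notMem {Ω : Type*} [Fintype Ω] [Nonempty Ω] {n : ℕ} (S : Set Ω) :
    meas {w : Fin n → Ω | ∀ i, w i ∉ S} = (1 - (Nat.card S : ℝ) / Fintype.card Ω) ^ n :=
  (meas_setOf_forall_mem fun _ => Sᶜ).trans <| by
    rw [Finset.prod_const, Finset.card_univ, Fintype.card_fin, card_compl_div_card]

lemma mem_covers_setOf_last_mem_iff {Ω : Type*} {n : ℕ} (S : Set Ω) (hn : 0 < n) {j : ℕ}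
    (hj : j < n) (w : Fin n → Ω) :
    w ∈ covers {a : Fin n → Ω | a ⟨n - 1, by omega⟩ ∈ S} j ↔ w ⟨n - 1 - j, by omega⟩ ∈ S := by
  constructor
  · rintro ⟨a, ha, hwa⟩
    rw [hwa ⟨n - 1 - j, by omega⟩ (by simp; omega)]
    convert Set.mem_ofPred.1 ha using 3
    simp only
    omega
  · intro hw
    refine ⟨fun k => w ⟨k - j, by omega⟩, hw, fun i _ => ?_⟩
    simp

lemma Uset_setOf_last_mem {Ω : Type*} {n : ℕ} (S : Set Ω) (hn : 0 < n) :
    Uset {a : Fin n → Ω | a ⟨n - 1, by omega⟩ ∈ S} = {w | ∀ i, w i ∉ S} := by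
  ext w
  simp only [Uset, Set.mem_ofPred_eq]
  constructor
  · intro hw i
    have hi := hw (n - 1 - i) (by omega)
    rw [mem_covers_setOf_last_mem_iff S hn (by omega)] at hi
    convert hi using 3
    ext
    simp only
    omega
  · intro hw j hj
    rw [mem_covers_setOf_last_mem_iff S hn hj]
    exact hw _

theorem stmt7 {Ω : Type*} [Fintype Ω] [Nonempty Ω] (n : ℕ) (hn : 1 ≤ n)
    (S : Set Ω)
    (p : ℝ) (hp : p = (Nat.card S : ℝ) / (Fintype.card Ω : ℝ))
    (A : Set (Fin n → Ω)) (hA : A = {w | w ⟨n - 1, by omega⟩ ∈ S}) :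
    Uset A = {w | ∀ i, w i ∉ S} ∧
    meas (Uset A) = (1 - p) ^ n ∧
    meas (Uset A) = (1 - meas A) ^ n := by
  have hU : Uset A = {w | ∀ i, w i ∉ S} := by
    rw [hA]
    exact Uset_setOf_last_mem S hn
  have hmeasU : meas (Uset A) = (1 - p) ^ n := by
    rw [hU, meas_setOf_forall_notMem, hp]
  have hmeasA : meas A = p := by
    rw [hA, meas_setOf_apply_mem, hp]
  exact ⟨hU, hmeasU, hmeasA ▸ hmeasU⟩
end

section
/- Let A ⊆ Ω^n have measure α ∈ (0,1). For w ∈ Ω^n let f(w) be the number of indices j ∈ {0,…,n−1} with w ∈ s^j(A) × Ω^j. Then for every integer t with 1 ≤ t ≤ n/4, μ({w ∈ Ω^n : f(w) ≤ t}) ≤ 4t/(αn). -/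
/-!
Put `b = 2t`. The covering indices of a word that has at most `t` of them miss at least `t`
of the `b` residues mod `b`, so it suffices to bound, for each residue `ρ`, the set `G_ρ` of
words with no covering index `≡ ρ (mod b)`.

For `w ∈ G_ρ` and `a ∈ A`, pick a gap `e < b` with `n + e ≡ ρ`. The word `a ξ w`
(any filler `ξ` of length `e`) has an `A`-factor at position `0` but none at the positive
multiples of `b` up to `n + e`: one at position `d` would cover `w` at index `n + e - d ≡ ρ`.
Hence inside a longer word, copies of such words at the offsets `0, b, 2b, …` exclude each
other, and counting gives `(n / b) |A| |G_ρ| ≤ |Ω|^{2n}`: the main theorem over the alphabet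
`Ω^b`.
-/

open Function Finset

theorem card_comp_mem_of_injective {α β Ω : Type*} [Fintype Ω] [Fintype α] [Fintype β]
    {f : α → β} (hf : Injective f) (S : Set (α → Ω)) :
    Nat.card {x : β → Ω | x ∘ f ∈ S} =
      Nat.card S * Fintype.card Ω ^ (Fintype.card β - Fintype.card α) := by
  classical
  let E : (β → Ω) ≃ (α → Ω) × ({b // b ∉ Set.range f} → Ω) :=
    (Equiv.piEquivPiSubtypeProd (· ∈ Set.range f) fun _ => Ω).trans
      ((Equiv.arrowCongr (Equiv.ofInjective f hf).symm (Equiv.refl Ω)).prodCongr (Equiv.refl _))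
  have hE : ∀ x, (E x).1 = x ∘ f := fun x => by
    funext a
    simp [E]
  have e : {x : β → Ω | x ∘ f ∈ S} ≃ S × ({b // b ∉ Set.range f} → Ω) :=
    (E.subtypeEquiv (q := fun p => p.1 ∈ S) (by simp [hE])).trans
      Equiv.prodSubtypeFstEquivSubtypeProd
  rw [Nat.card_congr e, Nat.card_prod, Nat.card_fun, Nat.card_eq_fintype_card (α := Ω),
    Nat.card_eq_fintype_card (α := {b // b ∉ Set.range f}), Fintype.card_subtype_compl,
    ← Set.card_range_of_injective hf]

section Windows

variable {Ω : Type*}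

def window {L ℓ : ℕ} (x : Fin L → Ω) (s : ℕ) (h : s + ℓ ≤ L) : Fin ℓ → Ω :=
  x ∘ Fin.castLE h ∘ Fin.natAdd s

theorem window_apply {L ℓ : ℕ} (x : Fin L → Ω) (s : ℕ) (h : s + ℓ ≤ L) (i : Fin ℓ) :
    window x s h i = x ⟨s + i, by omega⟩ :=
  rfl

theorem window_zero {L : ℕ} (x : Fin L → Ω) (h : 0 + L ≤ L) : window x 0 h = x := by
  funext i
  simp [window_apply]

theorem window_window {L W ℓ : ℕ} (x : Fin L → Ω) {p d s : ℕ} (hp : p + W ≤ L)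
    (hd : d + ℓ ≤ W) (hs : p + d = s) (h : s + ℓ ≤ L) :
    window (window x p hp) d hd = window x s h := by
  funext i
  simp only [window_apply]
  congr 2
  omega

theorem window_append_left {m k ℓ : ℕ} (u : Fin m → Ω) (v : Fin k → Ω) {s : ℕ}
    (h : s + ℓ ≤ m + k) (h' : s + ℓ ≤ m) :
    window (Fin.append u v) s h = window u s h' := by
  funext i
  rw [window_apply, window_apply, ← Fin.append_left u v]
  rfl

theorem window_append_right {m k : ℕ} (u : Fin m → Ω) (v : Fin k → Ω) (h : m + k ≤ m + k) :
    window (Fin.append u v) m h = v := by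
  funext i
  rw [window_apply, ← Fin.append_right u v]
  rfl

end Windows

section Occurrences

variable {Ω : Type*}

def OccursAt {ℓ L : ℕ} (A : Set (Fin ℓ → Ω)) (x : Fin L → Ω) (s : ℕ) : Prop :=
  ∃ h : s + ℓ ≤ L, window x s h ∈ A

theorem card_occursAt [Fintype Ω] {ℓ L s : ℕ} (S : Set (Fin ℓ → Ω)) (h : s + ℓ ≤ L) :
    Nat.card {x : Fin L → Ω | OccursAt S x s} = Nat.card S * Fintype.card Ω ^ (L - ℓ) := by
  have hf : Injective (Fin.castLE h ∘ Fin.natAdd s) := fun i j hij => by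
    simpa [Fin.ext_iff] using hij
  have hset : {x : Fin L → Ω | OccursAt S x s} = {x | x ∘ (Fin.castLE h ∘ Fin.natAdd s) ∈ S} := by
    ext x
    exact ⟨fun ⟨_, hx⟩ => hx, fun hx => ⟨h, hx⟩⟩
  rw [hset, card_comp_mem_of_injective hf, Fintype.card_fin, Fintype.card_fin]

theorem occursAt_window_iff {ℓ W L p d : ℕ} (A : Set (Fin ℓ → Ω)) (x : Fin L → Ω)
    (hp : p + W ≤ L) (hd : d + ℓ ≤ W) :
    OccursAt A (window x p hp) d ↔ OccursAt A x (p + d) := by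
  have h : p + d + ℓ ≤ L := by omega
  refine ⟨fun ⟨_, hx⟩ => ⟨h, ?_⟩, fun ⟨_, hx⟩ => ⟨hd, ?_⟩⟩
  · rwa [← window_window x hp hd rfl h]
  · rwa [window_window x hp hd rfl h]

theorem OccursAt.window_mem_covers {n L k p : ℕ} {A : Set (Fin n → Ω)} {z : Fin L → Ω}
    (hz : OccursAt A z k) (hkp : k ≤ p) (hp : p + n ≤ L) : window z p hp ∈ covers A (p - k) := by
  obtain ⟨hk, ha⟩ := hz
  refine ⟨_, ha, fun i hi => ?_⟩
  simp only [window_apply]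
  congr 2
  omega

end Occurrences

section Packing

variable {Ω : Type*} {n : ℕ}

def leadingOccurrenceOnly (A : Set (Fin n → Ω)) (e : ℕ) (D : Set ℕ) :
    Set (Fin (n + e + n) → Ω) :=
  {z | OccursAt A z 0 ∧ ∀ d ∈ D, ¬ OccursAt A z d}

theorem append_append_mem_leadingOccurrenceOnly {A G : Set (Fin n → Ω)} {e : ℕ} {D : Set ℕ}
    (hG : ∀ w ∈ G, ∀ d ∈ D, d ≤ n + e → w ∉ covers A (n + e - d))
    {a : Fin n → Ω} (ha : a ∈ A) (ξ : Fin e → Ω) {w : Fin n → Ω} (hw : w ∈ G) :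
    Fin.append (Fin.append a ξ) w ∈ leadingOccurrenceOnly A e D := by
  have h0 : 0 + n ≤ n + e + n := by omega
  have hlead : window (Fin.append (Fin.append a ξ) w) 0 h0 = a := by
    rw [window_append_left _ _ _ (by omega), window_append_left _ _ _ (by omega), window_zero]
  refine ⟨⟨h0, by rwa [hlead]⟩, fun d hd hocc => ?_⟩
  have hde : d ≤ n + e := by
    obtain ⟨hdn, -⟩ := hocc
    omega
  refine hG w hw d hd hde ?_
  rw [← window_append_right (Fin.append a ξ) w le_rfl]
  exact hocc.window_mem_covers hde le_rfl

theorem card_mul_le_card_leadingOccurrenceOnly [Fintype Ω] {A G : Set (Fin n → Ω)} (e : ℕ)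
    {D : Set ℕ} (hG : ∀ w ∈ G, ∀ d ∈ D, d ≤ n + e → w ∉ covers A (n + e - d)) :
    Nat.card A * Fintype.card Ω ^ e * Nat.card G ≤ Nat.card (leadingOccurrenceOnly A e D) := by
  let glue : A × (Fin e → Ω) × G → leadingOccurrenceOnly A e D := fun p =>
    ⟨_, append_append_mem_leadingOccurrenceOnly hG p.1.2 p.2.1 p.2.2.2⟩
  have hglue : Injective glue := by
    rintro ⟨a, ξ, w⟩ ⟨a', ξ', w'⟩ h
    have h' : Fin.appendEquiv (n + e) n (Fin.appendEquiv n e (a.1, ξ), w.1) =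
        Fin.appendEquiv (n + e) n (Fin.appendEquiv n e (a'.1, ξ'), w'.1) :=
      congrArg Subtype.val h
    obtain ⟨haξ, hw⟩ := Prod.ext_iff.mp ((Fin.appendEquiv _ _).injective h')
    obtain ⟨ha, hξ⟩ := Prod.ext_iff.mp ((Fin.appendEquiv _ _).injective haξ)
    simp_all [Subtype.ext_iff]
  simpa [Nat.card_prod, mul_assoc] using Nat.card_le_card_of_injective glue hglue

theorem OccursAt.not_occursAt_leadingOccurrenceOnly {A : Set (Fin n → Ω)} {e L p q : ℕ}
    {D : Set ℕ} {x : Fin L → Ω} (hx : OccursAt (leadingOccurrenceOnly A e D) x p) (hpq : p < q)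
    (hqpD : q - p ∈ D) (hqp : q - p ≤ n + e) :
    ¬ OccursAt (leadingOccurrenceOnly A e D) x q := by
  obtain ⟨hp, -, hnone⟩ := hx
  rintro ⟨hq, hlead, -⟩
  have hAq := (occursAt_window_iff A x hq (by omega)).mp hlead
  rw [add_zero, ← Nat.add_sub_cancel' hpq.le] at hAq
  exact hnone _ hqpD ((occursAt_window_iff A x hp (by omega)).mpr hAq)

theorem card_mul_card_leadingOccurrenceOnly_le [Fintype Ω] [Nonempty Ω] (A : Set (Fin n → Ω))
    (e : ℕ) {D : Set ℕ} {P : Finset ℕ} (hP : ∀ p ∈ P, p ≤ n + e)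
    (hPD : ∀ p ∈ P, ∀ q ∈ P, p < q → q - p ∈ D) :
    #P * Nat.card (leadingOccurrenceOnly A e D) ≤ Fintype.card Ω ^ (n + e + n) := by
  classical
  set Z := leadingOccurrenceOnly A e D
  let F : ℕ → Finset (Fin (n + e + n + (n + e)) → Ω) := fun p => {x | OccursAt Z x p}
  have hF : ∀ p ∈ P, #(F p) = Nat.card Z * Fintype.card Ω ^ (n + e) := fun p hp => by
    have hcard := card_occursAt Z (L := n + e + n + (n + e)) (s := p) (by linarith [hP p hp])
    rw [Nat.add_sub_cancel_left, Nat.card_eq_fintype_card, Fintype.card_subtype] at hcard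
    exact hcard
  have hdisj : (P : Set ℕ).PairwiseDisjoint F := by
    intro p hp q hq hpq
    refine disjoint_filter.mpr fun x _ hxp hxq => ?_
    rcases lt_or_gt_of_ne hpq with h | h
    · exact hxp.not_occursAt_leadingOccurrenceOnly h (hPD p hp q hq h) (by grind) hxq
    · exact hxq.not_occursAt_leadingOccurrenceOnly h (hPD q hq p hp h) (by grind) hxp
  refine Nat.le_of_mul_le_mul_right (c := Fintype.card Ω ^ (n + e)) ?_ (by positivity)
  calc #P * Nat.card Z * Fintype.card Ω ^ (n + e)
      = ∑ p ∈ P, #(F p) := by rw [sum_congr rfl hF, sum_const, smul_eq_mul, mul_assoc]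
    _ = #(P.biUnion F) := (card_biUnion hdisj).symm
    _ ≤ Fintype.card Ω ^ (n + e + n + (n + e)) := by simpa using card_le_univ (P.biUnion F)
    _ = Fintype.card Ω ^ (n + e + n) * Fintype.card Ω ^ (n + e) := pow_add _ _ _

theorem card_mul_card_mul_card_le [Fintype Ω] [Nonempty Ω] {A G : Set (Fin n → Ω)} {e : ℕ}
    {D : Set ℕ} {P : Finset ℕ} (hP : ∀ p ∈ P, p ≤ n + e)
    (hPD : ∀ p ∈ P, ∀ q ∈ P, p < q → q - p ∈ D)
    (hG : ∀ w ∈ G, ∀ d ∈ D, d ≤ n + e → w ∉ covers A (n + e - d)) :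
    #P * (Nat.card A * Nat.card G) ≤ Fintype.card Ω ^ (2 * n) := by
  refine Nat.le_of_mul_le_mul_right (c := Fintype.card Ω ^ e) ?_ (by positivity)
  calc #P * (Nat.card A * Nat.card G) * Fintype.card Ω ^ e
      = #P * (Nat.card A * Fintype.card Ω ^ e * Nat.card G) := by ring
    _ ≤ #P * Nat.card (leadingOccurrenceOnly A e D) :=
      Nat.mul_le_mul_left _ (card_mul_le_card_leadingOccurrenceOnly e hG)
    _ ≤ Fintype.card Ω ^ (n + e + n) := card_mul_card_leadingOccurrenceOnly_le A e hP hPD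
    _ = Fintype.card Ω ^ (2 * n) * Fintype.card Ω ^ e := by rw [← pow_add]; ring_nf

end Packing

section Residues

variable {Ω : Type*} {n : ℕ}

def residueAvoiding (A : Set (Fin n → Ω)) (b ρ : ℕ) : Set (Fin n → Ω) :=
  {w | ∀ c < n, w ∈ covers A c → c % b ≠ ρ}

theorem Nat.exists_lt_add_mod_eq (n : ℕ) {b ρ : ℕ} (hρ : ρ < b) : ∃ e < b, (n + e) % b = ρ := by
  have hn := Nat.div_add_mod n b
  have hr := Nat.mod_lt n (by omega : 0 < b)
  rcases le_or_gt (n % b) ρ with h | h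
  · refine ⟨ρ - n % b, by omega, ?_⟩
    rw [show n + (ρ - n % b) = ρ + b * (n / b) by omega, Nat.add_mul_mod_self_left,
      Nat.mod_eq_of_lt hρ]
  · refine ⟨b + ρ - n % b, by omega, ?_⟩
    rw [show n + (b + ρ - n % b) = ρ + b * (n / b + 1) by rw [Nat.mul_succ]; omega,
      Nat.add_mul_mod_self_left, Nat.mod_eq_of_lt hρ]

theorem card_mul_card_residueAvoiding_le [Fintype Ω] [Nonempty Ω] (A : Set (Fin n → Ω))
    {b ρ : ℕ} (hρ : ρ < b) :
    n * (Nat.card A * Nat.card (residueAvoiding A b ρ)) ≤ b * Fintype.card Ω ^ (2 * n) := by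
  obtain ⟨e, heb, he⟩ := Nat.exists_lt_add_mod_eq n hρ
  have hb : 0 < b := by omega
  set m := (n + e) / b
  set P := (range (m + 1)).image (b * ·)
  have hP : ∀ p ∈ P, p ≤ n + e := by
    simp only [P, mem_image, mem_range]
    rintro _ ⟨i, hi, rfl⟩
    exact (Nat.mul_le_mul_left b (by omega)).trans (Nat.mul_div_le (n + e) b)
  have hPD : ∀ p ∈ P, ∀ q ∈ P, p < q → q - p ∈ {d | b ∣ d ∧ 0 < d} := by
    simp only [P, mem_image, mem_range]
    rintro _ ⟨i, -, rfl⟩ _ ⟨j, -, rfl⟩ hij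
    exact ⟨Nat.dvd_sub (dvd_mul_right _ _) (dvd_mul_right _ _), by omega⟩
  have hG : ∀ w ∈ residueAvoiding A b ρ, ∀ d ∈ {d | b ∣ d ∧ 0 < d}, d ≤ n + e →
      w ∉ covers A (n + e - d) := by
    rintro w hw d ⟨⟨k, rfl⟩, hd⟩ hdn hcov
    have hbk : b ≤ b * k := Nat.le_mul_of_pos_right b (Nat.pos_of_mul_pos_left hd)
    exact hw _ (by omega) hcov (by rw [Nat.sub_mul_mod hdn, he])
  have hcard : #P = m + 1 := by
    rw [card_image_of_injective _ (mul_right_injective₀ hb.ne'), card_range]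
  have key := card_mul_card_mul_card_le hP hPD hG
  rw [hcard] at key
  calc n * (Nat.card A * Nat.card (residueAvoiding A b ρ))
      ≤ b * (m + 1) * (Nat.card A * Nat.card (residueAvoiding A b ρ)) :=
        Nat.mul_le_mul_right _ ((Nat.le_add_right n e).trans (Nat.lt_mul_div_succ (n + e) hb).le)
    _ ≤ b * Fintype.card Ω ^ (2 * n) := by
        rw [mul_assoc]
        exact Nat.mul_le_mul_left b key

open scoped Classical in
theorem sub_card_covers_le_card_residueAvoiding (A : Set (Fin n → Ω)) (b : ℕ) (w : Fin n → Ω) :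
    b - Nat.card {j : ℕ | j < n ∧ w ∈ covers A j} ≤
      #{ρ ∈ range b | w ∈ residueAvoiding A b ρ} := by
  set C := {j ∈ range n | w ∈ covers A j}
  have hC : Nat.card {j : ℕ | j < n ∧ w ∈ covers A j} = #C := by
    rw [← Nat.card_eq_finsetCard]
    exact Nat.card_congr (Equiv.subtypeEquivRight fun j => by simp [C])
  have hbad : {ρ ∈ range b | w ∉ residueAvoiding A b ρ} ⊆ C.image (· % b) := by
    intro ρ hρ
    simp only [residueAvoiding, mem_filter, mem_range, Set.mem_ofPred_eq, not_forall,
      not_not] at hρ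
    obtain ⟨-, c, hc, hcov, rfl⟩ := hρ
    exact mem_image_of_mem _ (mem_filter.mpr ⟨mem_range.mpr hc, hcov⟩)
  have hsplit := card_filter_add_card_filter_not (s := range b)
    (fun ρ => w ∈ residueAvoiding A b ρ)
  have hle := (card_le_card hbad).trans card_image_le
  rw [card_range] at hsplit
  omega

theorem sub_mul_card_le_sum_card_residueAvoiding [Fintype Ω] (A : Set (Fin n → Ω)) (b t : ℕ) :
    (b - t) * Nat.card {w : Fin n → Ω | Nat.card {j : ℕ | j < n ∧ w ∈ covers A j} ≤ t}
      ≤ ∑ ρ ∈ range b, Nat.card (residueAvoiding A b ρ) := by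
  classical
  simp only [Set.coe_ofPred, Nat.card_eq_fintype_card, Fintype.card_subtype]
  calc (b - t) * #{w : Fin n → Ω | Nat.card {j : ℕ | j < n ∧ w ∈ covers A j} ≤ t}
      = ∑ w ∈ {w : Fin n → Ω | Nat.card {j : ℕ | j < n ∧ w ∈ covers A j} ≤ t}, (b - t) := by
        rw [sum_const, smul_eq_mul, mul_comm]
    _ ≤ ∑ w ∈ {w : Fin n → Ω | Nat.card {j : ℕ | j < n ∧ w ∈ covers A j} ≤ t},
          #{ρ ∈ range b | w ∈ residueAvoiding A b ρ} := sum_le_sum fun w hw =>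
        (Nat.sub_le_sub_left (mem_filter.mp hw).2 b).trans
          (sub_card_covers_le_card_residueAvoiding A b w)
    _ ≤ ∑ w, #{ρ ∈ range b | w ∈ residueAvoiding A b ρ} :=
        sum_le_sum_of_subset (filter_subset _ _)
    _ = ∑ ρ ∈ range b, #{w | w ∈ residueAvoiding A b ρ} :=
        sum_card_bipartiteAbove_eq_sum_card_bipartiteBelow _

theorem sub_mul_mul_card_le [Fintype Ω] [Nonempty Ω] (A : Set (Fin n → Ω)) (b t : ℕ) :
    (b - t) * (n * (Nat.card A *
      Nat.card {w : Fin n → Ω | Nat.card {j : ℕ | j < n ∧ w ∈ covers A j} ≤ t}))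
      ≤ b * (b * Fintype.card Ω ^ (2 * n)) :=
  calc (b - t) * (n * (Nat.card A *
        Nat.card {w : Fin n → Ω | Nat.card {j : ℕ | j < n ∧ w ∈ covers A j} ≤ t}))
      = n * Nat.card A * ((b - t) *
        Nat.card {w : Fin n → Ω | Nat.card {j : ℕ | j < n ∧ w ∈ covers A j} ≤ t}) := by ring
    _ ≤ n * Nat.card A * ∑ ρ ∈ range b, Nat.card (residueAvoiding A b ρ) :=
        Nat.mul_le_mul_left _ (sub_mul_card_le_sum_card_residueAvoiding A b t)
    _ = ∑ ρ ∈ range b, n * (Nat.card A * Nat.card (residueAvoiding A b ρ)) := by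
        rw [mul_sum]
        simp only [mul_assoc]
    _ ≤ ∑ _ρ ∈ range b, b * Fintype.card Ω ^ (2 * n) :=
        sum_le_sum fun ρ hρ => card_mul_card_residueAvoiding_le A (mem_range.mp hρ)
    _ = b * (b * Fintype.card Ω ^ (2 * n)) := by rw [sum_const, card_range, smul_eq_mul]

end Residues

theorem stmt15_general {Ω : Type*} [Fintype Ω] [Nonempty Ω] {n : ℕ} (A : Set (Fin n → Ω))
    (α : ℝ) (hα : meas A = α) (h0 : 0 < α)
    (t : ℕ) (ht1 : 1 ≤ t) (ht2 : 4 * t ≤ n) :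
    meas {w : Fin n → Ω | Nat.card {j : ℕ | j < n ∧ w ∈ covers A j} ≤ t}
      ≤ 4 * t / (α * n) := by
  set S := {w : Fin n → Ω | Nat.card {j : ℕ | j < n ∧ w ∈ covers A j} ≤ t}
  set q := Fintype.card Ω
  have hcount : t * (n * (Nat.card A * Nat.card S)) ≤ t * (4 * t * q ^ (2 * n)) := by
    have h := sub_mul_mul_card_le A (2 * t) t
    rwa [two_mul, Nat.add_sub_cancel, show (t + t) * ((t + t) * q ^ (2 * n)) =
      t * (4 * t * q ^ (2 * n)) by ring] at h
  have hreal : (n * (Nat.card A * Nat.card S) : ℝ) ≤ 4 * t * (q : ℝ) ^ (2 * n) := by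
    exact_mod_cast Nat.le_of_mul_le_mul_left hcount (by omega)
  have hn : (0 : ℝ) < n := by exact_mod_cast (by omega : 0 < n)
  rw [le_div_iff₀ (by positivity), ← hα, meas, meas]
  calc (Nat.card S : ℝ) / (q : ℝ) ^ n * ((Nat.card A : ℝ) / (q : ℝ) ^ n * n)
      = (n * (Nat.card A * Nat.card S) : ℝ) / (q : ℝ) ^ (2 * n) := by
        rw [two_mul, pow_add]; field_simp
    _ ≤ 4 * t := by rwa [div_le_iff₀ (by positivity)]

theorem stmt15 {Ω : Type*} [Fintype Ω] [Nonempty Ω] {n : ℕ} (A : Set (Fin n → Ω))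
    (α : ℝ) (hα : meas A = α) (h0 : 0 < α) (h1 : α < 1)
    (t : ℕ) (ht1 : 1 ≤ t) (ht2 : 4 * t ≤ n) :
    meas {w : Fin n → Ω | Nat.card {j : ℕ | j < n ∧ w ∈ covers A j} ≤ t}
      ≤ 4 * t / (α * n) :=
  stmt15_general A α hα h0 t ht1 ht2
end
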